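/- arXiv:2605.17760 — 3 statements merged into one kernel-verified Lean document; each statement's English description precedes it below -/
import Mathlib

section
/- Let G=(V,E) be a finite multigraph with m>0 and no isolated vertices, and suppose τ(G) ≤ ε. Then for every real L ≥ 1, Σ_{s∈V} π(s)·μ_L(s) ≤ ε·L. Consequently, for every a>0, Σ_{s∈V: μ_L(s) ≥ a} π(s) ≤ εL/a. -/
open scoped Classical

noncomputable section

/-- Degree of a vertex in a finite multigraph given by endpoint maps (with multiplicity). -/
def mdeg {V E : Type} [Fintype E] [DecidableEq V] (fste snde : E → V) (v : V) : ℕ :=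
  (Finset.univ.filter (fun e => fste e = v)).card +
    (Finset.univ.filter (fun e => snde e = v)).card

/-- The parity-lifted lazy walk on `V × {±1}` (sign encoded by `Bool`, `true = +1`):
from `(v,σ)` stay put with probability `1/2`, and for each edge copy with endpoints `v,u`,
move to `(u,¬σ)` with probability `1/(2 deg v)`. -/
def parWalk {V E : Type} [Fintype V] [Fintype E] [DecidableEq V]
    (fste snde : E → V) : Matrix (V × Bool) (V × Bool) ℝ :=
  Matrix.of fun p q =>
    (if q = p then (1 / 2 : ℝ) else 0) +
    (if q.2 = !p.2 then
        ((Finset.univ.filter (fun e =>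
            (fste e = p.1 ∧ snde e = q.1) ∨ (snde e = p.1 ∧ fste e = q.1))).card : ℝ) /
          (2 * (mdeg fste snde p.1 : ℝ))
      else 0)

/-- The geometric (Personalized PageRank) kernel at scale `L`:
`pr_L = (1/(L+1)) Σ_t (L/(L+1))^t M̂^t`. -/
def parPr {V E : Type} [Fintype V] [Fintype E] [DecidableEq V]
    (fste snde : E → V) (L : ℝ) (p q : V × Bool) : ℝ :=
  ∑' t : ℕ, (1 / (L + 1)) * (L / (L + 1)) ^ t * (parWalk fste snde ^ t) p q

/-- Even/odd overlap statistic: `μ_L(s) = Σ_v min{p⁺_{L,s}(v), p⁻_{L,s}(v)}` where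
`p^{±}_{L,s}(v) = pr_L((s,+1),(v,±1))`. -/
def parMu {V E : Type} [Fintype V] [Fintype E] [DecidableEq V]
    (fste snde : E → V) (L : ℝ) (s : V) : ℝ :=
  ∑ v : V, min (parPr fste snde L (s, true) (v, true)) (parPr fste snde L (s, true) (v, false))

/-- `τ(G)`: the minimum, over two-colorings `χ : V → {±1}`, of the fraction of monochromatic
edge copies. -/
def tauBip {V E : Type} [Fintype V] [Fintype E] [DecidableEq V] (fste snde : E → V) : ℝ :=
  ⨅ χ : V → Bool,
    ((Finset.univ.filter (fun e => χ (fste e) = χ (snde e))).card : ℝ) / (Fintype.card E : ℝ)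

/-!
Fix a colouring `χ` and read a state `(v, σ)` of the lifted walk through its parity
`χ v ⊕ σ`. A lazy step keeps both `v` and `σ`, and a step along a bichromatic edge flips both
the colour and the sign, so the parity can only change when the walk crosses a monochromatic
edge copy. For each `v` one of `p⁺(v)`, `p⁻(v)` has the wrong parity, so `μ_L(s)` is at most the
probability that the walk has crossed a monochromatic edge before an independent geometric time
of mean `L`. The vertex marginal of the lifted walk is the lazy walk on `G`, for which `π` is
stationary; started from `π`, each step therefore crosses a monochromatic edge copy with
probability `τ/2`, whence `E_π μ_L ≤ τ L / 2`. The tail bound is Markov's inequality.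
-/

open Finset Matrix

namespace Matrix

variable {S β : Type*} [Fintype S] [DecidableEq S] [DecidableEq β]

def flipRate (P : Matrix S S ℝ) (h : S → β) (q : S) : ℝ :=
  ∑ q', P q q' * if h q' = h q then 0 else 1

theorem sum_pow_apply_mul_ne_le {P : Matrix S S ℝ} (hP : P ∈ rowStochastic ℝ S) (h : S → β)
    (p : S) (t : ℕ) :
    ∑ q, (P ^ t) p q * (if h q = h p then 0 else 1) ≤
      ∑ k ∈ range t, ∑ q, (P ^ k) p q * flipRate P h q := by
  induction t with
  | zero =>
    refine (sum_eq_zero fun q _ => ?_).le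
    rw [pow_zero, one_apply]
    split_ifs <;> simp_all
  | succ t ih =>
    have step : ∀ q, ∑ q', P q q' * (if h q' = h p then 0 else 1) ≤
        (if h q = h p then 0 else 1) + flipRate P h q := by
      intro q
      calc ∑ q', P q q' * (if h q' = h p then 0 else 1)
          ≤ ∑ q', P q q' * ((if h q = h p then 0 else 1) + if h q' = h q then 0 else 1) := by
            gcongr with q'
            · exact nonneg_of_mem_rowStochastic hP
            · split_ifs <;> simp_all
        _ = (if h q = h p then 0 else 1) + flipRate P h q := by
            simp only [mul_add, sum_add_distrib, ← sum_mul, sum_row_of_mem_rowStochastic hP,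
              one_mul, flipRate]
    calc ∑ q', (P ^ (t + 1)) p q' * (if h q' = h p then 0 else 1)
        = ∑ q, (P ^ t) p q * ∑ q', P q q' * (if h q' = h p then 0 else 1) := by
          simp only [pow_succ, mul_apply, sum_mul, mul_sum, mul_assoc]
          exact sum_comm
      _ ≤ ∑ q, (P ^ t) p q * ((if h q = h p then 0 else 1) + flipRate P h q) := by
          gcongr with q
          · exact nonneg_of_mem_rowStochastic (pow_mem hP t)
          · exact step q
      _ ≤ ∑ k ∈ range (t + 1), ∑ q, (P ^ k) p q * flipRate P h q := by
          rw [sum_range_succ]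
          simp only [mul_add, sum_add_distrib]
          gcongr

theorem summable_geom_mul_pow_apply {P : Matrix S S ℝ} (hP : P ∈ rowStochastic ℝ S)
    {L : ℝ} (hL : 0 ≤ L) (p q : S) :
    Summable fun t : ℕ => 1 / (L + 1) * (L / (L + 1)) ^ t * (P ^ t) p q := by
  have hr : L / (L + 1) < 1 := (div_lt_one (by linarith)).2 (by linarith)
  refine .of_nonneg_of_le (fun t => ?_) (fun t => ?_)
    ((summable_geometric_of_lt_one (by positivity) hr).mul_left (1 / (L + 1)))
  · exact mul_nonneg (by positivity) (nonneg_of_mem_rowStochastic (pow_mem hP t))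
  · exact mul_le_of_le_one_right (by positivity) (le_one_of_mem_rowStochastic (pow_mem hP t))

theorem sum_pow_apply_prodMk {V B R : Type*} [Fintype V] [DecidableEq V] [Fintype B]
    [DecidableEq B] [Semiring R] (P : Matrix (V × B) (V × B) R) (W : Matrix V V R)
    (hPW : ∀ v c u, ∑ b, P (v, c) (u, b) = W v u) (t : ℕ) (v : V) (c : B) (u : V) :
    ∑ b, (P ^ t) (v, c) (u, b) = (W ^ t) v u := by
  induction t generalizing u with
  | zero =>
    by_cases hvu : v = u
    · subst hvu; simp [one_apply]
    · simp [hvu]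
  | succ t ih =>
    simp only [pow_succ, mul_apply, Fintype.sum_prod_type]
    rw [sum_comm]
    refine sum_congr rfl fun w _ => ?_
    rw [sum_comm]
    simp only [← mul_sum, hPW, ← sum_mul, ih]

theorem vecMul_pow_eq_self {n R : Type*} [Fintype n] [DecidableEq n] [Semiring R]
    {A : Matrix n n R} {x : n → R} (h : x ᵥ* A = x) (t : ℕ) : x ᵥ* A ^ t = x := by
  induction t with
  | zero => simp
  | succ t ih => rw [pow_succ, ← vecMul_vecMul, ih, h]

end Matrix

theorem hasSum_mean_geometric {L : ℝ} (hL : 0 ≤ L) :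
    HasSum (fun t : ℕ => 1 / (L + 1) * (t * (L / (L + 1)) ^ t)) L := by
  have hL1 : L + 1 ≠ 0 := by positivity
  have hr : ‖L / (L + 1)‖ < 1 := by
    rw [Real.norm_of_nonneg (by positivity)]
    exact (div_lt_one (by linarith)).2 (by linarith)
  have hsum := (hasSum_coe_mul_geometric_of_norm_lt_one hr).mul_left (1 / (L + 1))
  have hval : 1 / (L + 1) * (L / (L + 1) / (1 - L / (L + 1)) ^ 2) = L := by
    rw [one_sub_div hL1, add_sub_cancel_left]
    field_simp
  rwa [hval] at hsum

theorem Finset.sum_filter_le_div_of_nonneg {ι : Type*} (s : Finset ι) {w f : ι → ℝ}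
    (hw : ∀ i ∈ s, 0 ≤ w i) (hf : ∀ i ∈ s, 0 ≤ f i) {a : ℝ} (ha : 0 < a) :
    ∑ i ∈ s with a ≤ f i, w i ≤ (∑ i ∈ s, w i * f i) / a := by
  rw [le_div_iff₀ ha, sum_mul]
  calc ∑ i ∈ s with a ≤ f i, w i * a
      ≤ ∑ i ∈ s with a ≤ f i, w i * f i :=
        sum_le_sum fun i hi => mul_le_mul_of_nonneg_left (mem_filter.1 hi).2
          (hw i (mem_filter.1 hi).1)
    _ ≤ ∑ i ∈ s, w i * f i :=
        sum_le_sum_of_subset_of_nonneg (filter_subset _ _)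
          fun i hi _ => mul_nonneg (hw i hi) (hf i hi)

namespace ParityWalk

variable {V E : Type} [Fintype E] [DecidableEq V] (fste snde : E → V)

def edgeCount (u v : V) : ℕ :=
  #{e | (fste e = u ∧ snde e = v) ∨ (snde e = u ∧ fste e = v)}

theorem edgeCount_comm (u v : V) : edgeCount fste snde u v = edgeCount fste snde v u := by
  simp only [edgeCount, or_comm, and_comm]

def degWeight (v : V) : ℝ := mdeg fste snde v / (2 * Fintype.card E)

def monoFrac (χ : V → Bool) : ℝ := #{e | χ (fste e) = χ (snde e)} / Fintype.card E

variable {fste snde}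

theorem degWeight_mul_div (hdeg : ∀ v, 0 < mdeg fste snde v) (v : V) (x : ℝ) :
    degWeight fste snde v * (x / (2 * mdeg fste snde v)) = x / (4 * Fintype.card E) := by
  have hv : (mdeg fste snde v : ℝ) ≠ 0 := by exact_mod_cast (hdeg v).ne'
  rw [degWeight, div_mul_div_comm, mul_comm (mdeg fste snde v : ℝ) x,
    show 2 * (Fintype.card E : ℝ) * (2 * mdeg fste snde v) =
      4 * Fintype.card E * mdeg fste snde v by ring]
  exact mul_div_mul_right x _ hv

theorem degWeight_nonneg (v : V) : 0 ≤ degWeight fste snde v := by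
  unfold degWeight; positivity

variable [Fintype V]

theorem sum_edgeCount_mul (hne : ∀ e, fste e ≠ snde e) (u : V) (g : V → ℝ) :
    ∑ v, (edgeCount fste snde u v : ℝ) * g v =
      ∑ e, ((if fste e = u then g (snde e) else 0) + if snde e = u then g (fste e) else 0) := by
  simp only [edgeCount, natCast_card_filter, sum_mul]
  rw [sum_comm]
  refine sum_congr rfl fun e _ => ?_
  by_cases h1 : fste e = u <;> by_cases h2 : snde e = u
  · exact absurd (h1.trans h2.symm) (hne e)
  all_goals simp [h1, h2]

theorem sum_edgeCount (hne : ∀ e, fste e ≠ snde e) (u : V) :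
    ∑ v, (edgeCount fste snde u v : ℝ) = mdeg fste snde u := by
  have h := sum_edgeCount_mul hne u 1
  simp only [Pi.one_apply, mul_one] at h
  rw [h, mdeg, Nat.cast_add, natCast_card_filter, natCast_card_filter, ← sum_add_distrib]

theorem sum_sum_edgeCount_mul_mono (hne : ∀ e, fste e ≠ snde e) (χ : V → Bool) :
    ∑ u, ∑ v, (edgeCount fste snde u v : ℝ) * (if χ u = χ v then 1 else 0) =
      2 * #{e | χ (fste e) = χ (snde e)} := by
  simp only [sum_edgeCount_mul hne, natCast_card_filter, mul_sum]
  rw [sum_comm]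
  refine sum_congr rfl fun e _ => ?_
  by_cases h : χ (fste e) = χ (snde e) <;>
    simp [sum_add_distrib, h, eq_comm, one_add_one_eq_two]

variable (fste snde) in
def monoRate (χ : V → Bool) (u : V) : ℝ :=
  (∑ v, (edgeCount fste snde u v : ℝ) * (if χ u = χ v then 1 else 0)) / (2 * mdeg fste snde u)

theorem sum_degWeight_mul_monoRate (hne : ∀ e, fste e ≠ snde e)
    (hdeg : ∀ v, 0 < mdeg fste snde v) (χ : V → Bool) :
    ∑ u, degWeight fste snde u * monoRate fste snde χ u = monoFrac fste snde χ / 2 := by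
  simp only [monoRate, degWeight_mul_div hdeg, ← sum_div, sum_sum_edgeCount_mul_mono hne,
    monoFrac]
  ring

variable (fste snde) in
def lazyWalk : Matrix V V ℝ :=
  of fun v u => (if u = v then 1 / 2 else 0) + edgeCount fste snde v u / (2 * mdeg fste snde v)

variable (fste snde) in
theorem parWalk_apply (p q : V × Bool) :
    parWalk fste snde p q = (if q = p then 1 / 2 else 0) +
      if q.2 = !p.2 then (edgeCount fste snde p.1 q.1 : ℝ) / (2 * mdeg fste snde p.1) else 0 :=
  rfl

variable (fste snde) in
theorem sum_parWalk_prodMk (v : V) (c : Bool) (u : V) :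
    ∑ b, parWalk fste snde (v, c) (u, b) = lazyWalk fste snde v u := by
  simp only [parWalk_apply, lazyWalk, of_apply, Fintype.sum_bool, Prod.mk.injEq]
  cases c <;> by_cases h : u = v <;> simp [h, add_comm]

theorem parWalk_mem_rowStochastic (hne : ∀ e, fste e ≠ snde e)
    (hdeg : ∀ v, 0 < mdeg fste snde v) :
    parWalk fste snde ∈ rowStochastic ℝ (V × Bool) := by
  refine mem_rowStochastic_iff_sum.2 ⟨fun p q => ?_, fun ⟨v, c⟩ => ?_⟩
  · rw [parWalk_apply]
    split_ifs <;> positivity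
  · have hv : (mdeg fste snde v : ℝ) ≠ 0 := by exact_mod_cast (hdeg v).ne'
    simp only [Fintype.sum_prod_type, sum_parWalk_prodMk, lazyWalk, of_apply,
      sum_add_distrib, ← sum_div, sum_edgeCount hne]
    field_simp
    norm_num

theorem degWeight_vecMul_lazyWalk (hne : ∀ e, fste e ≠ snde e)
    (hdeg : ∀ v, 0 < mdeg fste snde v) :
    degWeight fste snde ᵥ* lazyWalk fste snde = degWeight fste snde := by
  ext u
  simp only [vecMul, dotProduct, lazyWalk, of_apply, mul_add, sum_add_distrib,
    degWeight_mul_div hdeg, ← sum_div]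
  simp_rw [edgeCount_comm fste snde _ u]
  rw [sum_edgeCount hne]
  simp [degWeight]
  ring

def parity (χ : V → Bool) (q : V × Bool) : Bool := xor (χ q.1) q.2

def mismatch (χ : V → Bool) (s : V) (q : V × Bool) : ℝ :=
  if parity χ q = parity χ (s, true) then 0 else 1

theorem flipRate_parWalk_parity (χ : V → Bool) (q : V × Bool) :
    flipRate (parWalk fste snde) (parity χ) q = monoRate fste snde χ q.1 := by
  obtain ⟨u, c⟩ := q
  simp only [flipRate, monoRate, Fintype.sum_prod_type, parWalk_apply, Fintype.sum_bool, sum_div]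
  refine sum_congr rfl fun v _ => ?_
  by_cases hv : v = u
  · subst hv; cases c <;> simp [parity]
  · cases c <;> cases hχv : χ v <;> cases hχu : χ u <;> simp [parity, hv, hχv, hχu]

theorem sum_degWeight_mul_sum_pow_parWalk (hne : ∀ e, fste e ≠ snde e)
    (hdeg : ∀ v, 0 < mdeg fste snde v) (f : V → ℝ) (t : ℕ) (c : Bool) :
    ∑ s, degWeight fste snde s * ∑ q, (parWalk fste snde ^ t) (s, c) q * f q.1 =
      ∑ u, degWeight fste snde u * f u := by
  have hlump : ∀ s, ∑ q, (parWalk fste snde ^ t) (s, c) q * f q.1 =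
      (lazyWalk fste snde ^ t *ᵥ f) s := by
    intro s
    simp only [Fintype.sum_prod_type, ← sum_mul,
      sum_pow_apply_prodMk _ _ (sum_parWalk_prodMk fste snde), mulVec, dotProduct]
  simp only [hlump]
  change degWeight fste snde ⬝ᵥ (lazyWalk fste snde ^ t *ᵥ f) = degWeight fste snde ⬝ᵥ f
  rw [dotProduct_mulVec, vecMul_pow_eq_self (degWeight_vecMul_lazyWalk hne hdeg)]

theorem sum_degWeight_mul_mismatch_le (hne : ∀ e, fste e ≠ snde e)
    (hdeg : ∀ v, 0 < mdeg fste snde v) (χ : V → Bool) (t : ℕ) :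
    ∑ s, degWeight fste snde s * ∑ q, (parWalk fste snde ^ t) (s, true) q * mismatch χ s q ≤
      t * (monoFrac fste snde χ / 2) := by
  calc ∑ s, degWeight fste snde s * ∑ q, (parWalk fste snde ^ t) (s, true) q * mismatch χ s q
      ≤ ∑ s, degWeight fste snde s * ∑ k ∈ range t,
          ∑ q, (parWalk fste snde ^ k) (s, true) q *
            flipRate (parWalk fste snde) (parity χ) q := by
        gcongr with s
        · exact degWeight_nonneg s
        · exact sum_pow_apply_mul_ne_le (parWalk_mem_rowStochastic hne hdeg) _ _ t
    _ = ∑ k ∈ range t, ∑ s, degWeight fste snde s *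
          ∑ q, (parWalk fste snde ^ k) (s, true) q *
            flipRate (parWalk fste snde) (parity χ) q := by
        simp only [mul_sum]
        exact sum_comm
    _ = t * (monoFrac fste snde χ / 2) := by
        simp only [flipRate_parWalk_parity, sum_degWeight_mul_sum_pow_parWalk hne hdeg,
          sum_degWeight_mul_monoRate hne hdeg, sum_const, card_range, nsmul_eq_mul]

theorem hasSum_parPr (hne : ∀ e, fste e ≠ snde e) (hdeg : ∀ v, 0 < mdeg fste snde v)
    {L : ℝ} (hL : 0 ≤ L) (p q : V × Bool) :
    HasSum (fun t : ℕ => 1 / (L + 1) * (L / (L + 1)) ^ t * (parWalk fste snde ^ t) p q)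
      (parPr fste snde L p q) :=
  (summable_geom_mul_pow_apply (parWalk_mem_rowStochastic hne hdeg) hL p q).hasSum

theorem parPr_nonneg (hne : ∀ e, fste e ≠ snde e) (hdeg : ∀ v, 0 < mdeg fste snde v)
    {L : ℝ} (hL : 0 ≤ L) (p q : V × Bool) : 0 ≤ parPr fste snde L p q :=
  (hasSum_parPr hne hdeg hL p q).nonneg fun t => mul_nonneg (by positivity)
    (nonneg_of_mem_rowStochastic (pow_mem (parWalk_mem_rowStochastic hne hdeg) t))

theorem parMu_nonneg (hne : ∀ e, fste e ≠ snde e) (hdeg : ∀ v, 0 < mdeg fste snde v)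
    {L : ℝ} (hL : 0 ≤ L) (s : V) : 0 ≤ parMu fste snde L s :=
  sum_nonneg fun _ _ => le_min (parPr_nonneg hne hdeg hL _ _) (parPr_nonneg hne hdeg hL _ _)

theorem parMu_le_sum_parPr_mul_mismatch (L : ℝ) (χ : V → Bool) (s : V) :
    parMu fste snde L s ≤ ∑ q, parPr fste snde L (s, true) q * mismatch χ s q := by
  rw [parMu, Fintype.sum_prod_type]
  refine sum_le_sum fun v _ => ?_
  cases hχv : χ v <;> cases hχs : χ s <;> simp [mismatch, parity, hχv, hχs]

theorem sum_degWeight_mul_parMu_le (hne : ∀ e, fste e ≠ snde e)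
    (hdeg : ∀ v, 0 < mdeg fste snde v) (χ : V → Bool) {L : ℝ} (hL : 0 ≤ L) :
    ∑ s, degWeight fste snde s * parMu fste snde L s ≤
      monoFrac fste snde χ / 2 * L := by
  set c := monoFrac fste snde χ / 2
  have hsum := hasSum_sum fun s (_ : s ∈ univ) => (hasSum_sum fun q (_ : q ∈ univ) =>
    (hasSum_parPr hne hdeg hL (s, true) q).mul_right (mismatch χ s q)).mul_left
      (degWeight fste snde s)
  calc ∑ s, degWeight fste snde s * parMu fste snde L s
      ≤ ∑ s, degWeight fste snde s *
          ∑ q, parPr fste snde L (s, true) q * mismatch χ s q := by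
        gcongr with s
        · exact degWeight_nonneg s
        · exact parMu_le_sum_parPr_mul_mismatch L χ s
    _ ≤ L * c := by
        refine hasSum_le (fun t => ?_) hsum ((hasSum_mean_geometric hL).mul_right c)
        calc ∑ s, degWeight fste snde s * ∑ q,
              1 / (L + 1) * (L / (L + 1)) ^ t * (parWalk fste snde ^ t) (s, true) q *
                mismatch χ s q
            = 1 / (L + 1) * (L / (L + 1)) ^ t * ∑ s, degWeight fste snde s *
                ∑ q, (parWalk fste snde ^ t) (s, true) q * mismatch χ s q := by
              simp only [mul_sum]
              exact sum_congr rfl fun s _ => sum_congr rfl fun q _ => by ring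
          _ ≤ 1 / (L + 1) * (L / (L + 1)) ^ t * (t * c) := by
              gcongr
              exact sum_degWeight_mul_mismatch_le hne hdeg χ t
          _ = 1 / (L + 1) * (t * (L / (L + 1)) ^ t) * c := by ring
    _ = c * L := mul_comm L c

end ParityWalk

open ParityWalk

theorem stmt12_general (V E : Type) [Fintype V] [Fintype E] [DecidableEq V]
    (fste snde : E → V) (hne : ∀ e, fste e ≠ snde e)
    (hdeg : ∀ v, 0 < mdeg fste snde v)
    (ε : ℝ) (hτ : tauBip fste snde ≤ ε) :
    ∀ L : ℝ, 1 ≤ L →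
      (∑ s : V, ((mdeg fste snde s : ℝ) / (2 * (Fintype.card E : ℝ))) * parMu fste snde L s)
          ≤ ε * L ∧
      ∀ a : ℝ, 0 < a →
        (∑ s ∈ Finset.univ.filter (fun s : V => a ≤ parMu fste snde L s),
            ((mdeg fste snde s : ℝ) / (2 * (Fintype.card E : ℝ))))
          ≤ ε * L / a := by
  intro L hL
  obtain ⟨χ, hχ⟩ := exists_eq_ciInf_of_finite (f := monoFrac fste snde)
  have hχε : monoFrac fste snde χ / 2 ≤ ε :=
    (half_le_self (by unfold monoFrac; positivity)).trans (hχ ▸ hτ)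
  have hmean : ∑ s, degWeight fste snde s * parMu fste snde L s ≤ ε * L :=
    (sum_degWeight_mul_parMu_le hne hdeg χ (by linarith)).trans
      (mul_le_mul_of_nonneg_right hχε (by linarith))
  refine ⟨hmean, fun a ha => ?_⟩
  exact (sum_filter_le_div_of_nonneg _ (fun s _ => degWeight_nonneg s)
    (fun s _ => parMu_nonneg hne hdeg (by linarith) s) ha).trans
    (div_le_div_of_nonneg_right hmean ha.le)

/-- Weighted completeness for parity overlap: if `τ(G) ≤ ε` then
`E_{s∼π} μ_L(s) ≤ ε L`, and hence `Pr_{s∼π}[μ_L(s) ≥ a] ≤ ε L / a`. -/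
theorem stmt12 (V E : Type) [Fintype V] [Fintype E] [DecidableEq V]
    (fste snde : E → V) (hne : ∀ e, fste e ≠ snde e)
    (hdeg : ∀ v, 0 < mdeg fste snde v)
    (hm : 0 < Fintype.card E)
    (ε : ℝ) (hτ : tauBip fste snde ≤ ε) :
    ∀ L : ℝ, 1 ≤ L →
      (∑ s : V, ((mdeg fste snde s : ℝ) / (2 * (Fintype.card E : ℝ))) * parMu fste snde L s)
          ≤ ε * L ∧
      ∀ a : ℝ, 0 < a →
        (∑ s ∈ Finset.univ.filter (fun s : V => a ≤ parMu fste snde L s),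
            ((mdeg fste snde s : ℝ) / (2 * (Fintype.card E : ℝ))))
          ≤ ε * L / a :=
  stmt12_general V E fste snde hne hdeg ε hτ
end
end

section
/- Let L,L' be reals with 1 ≤ L ≤ L', and for a real L≥1 let Geom_L denote the probability distribution on ℕ with Geom_L({t}) = (1/(L+1))·(L/(L+1))^t for t=0,1,2,…. Then there exists a probability distribution ν on ℕ such that Geom_{L'} is the convolution of Geom_L with ν; that is, Geom_{L'}({t}) = Σ_{h=0}^{t} Geom_L({h})·ν({t−h}) for every t∈ℕ. -/
/-- The geometric distribution on `ℕ` with mean `L`: `Geom_L({t}) = (1/(L+1))·(L/(L+1))^t`. -/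
noncomputable def geomPMF (L : ℝ) (t : ℕ) : ℝ := (1 / (L + 1)) * (L / (L + 1)) ^ t

/-!
Writing `a = L/(L+1)` and `b = L'/(L'+1)`, so that `Geom_L` has generating function
`(1-a)/(1-az)` and `a ≤ b`, the quotient of generating functions is
`(1-b)/(1-a) · (1-az)/(1-bz)`. Its coefficients, `(1-b)/(1-a)` at `0` and
`(1-b)/(1-a) · (b-a) b^(n-1)` at `n ≥ 1`, are nonnegative and sum to `1`, so they form the
required distribution `ν`.
-/

open Finset

/-- The coefficients of `(1 - a z) / (1 - b z)`. -/
def geomQuotCoeff (a b : ℝ) : ℕ → ℝ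
  | 0 => 1
  | n + 1 => (b - a) * b ^ n

theorem sum_range_pow_mul_geomQuotCoeff (a b : ℝ) (t : ℕ) :
    ∑ h ∈ range (t + 1), a ^ h * geomQuotCoeff a b (t - h) = b ^ t := by
  induction t with
  | zero => simp [geomQuotCoeff]
  | succ t ih =>
    have hshift : ∑ h ∈ range (t + 1), a ^ (h + 1) * geomQuotCoeff a b (t + 1 - (h + 1)) =
        a * b ^ t := by
      simp only [Nat.add_sub_add_right, pow_succ', mul_assoc, ← mul_sum, ih]
    rw [sum_range_succ', hshift, Nat.sub_zero, pow_zero, one_mul, geomQuotCoeff]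
    ring

theorem geomQuotCoeff_nonneg {a b : ℝ} (hab : a ≤ b) (hb : 0 ≤ b) (n : ℕ) :
    0 ≤ geomQuotCoeff a b n := by
  cases n with
  | zero => exact zero_le_one
  | succ n => exact mul_nonneg (sub_nonneg.mpr hab) (pow_nonneg hb n)

theorem hasSum_geomQuotCoeff (a : ℝ) {b : ℝ} (hb : |b| < 1) :
    HasSum (geomQuotCoeff a b) ((1 - a) / (1 - b)) := by
  have hb1 : 1 - b ≠ 0 := sub_ne_zero.mpr (abs_lt.mp hb).2.ne'
  have hsum := ((hasSum_geometric_of_abs_lt_one hb).mul_left (b - a)).zero_add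
    (f := geomQuotCoeff a b)
  rwa [show geomQuotCoeff a b 0 + (b - a) * (1 - b)⁻¹ = (1 - a) / (1 - b) by
    simp only [geomQuotCoeff]; field_simp; ring] at hsum

noncomputable def geomRatio (L : ℝ) : ℝ := L / (L + 1)

theorem geomPMF_eq (L : ℝ) (hL : L + 1 ≠ 0) (t : ℕ) :
    geomPMF L t = (1 - geomRatio L) * geomRatio L ^ t := by
  rw [geomPMF, geomRatio, one_sub_div hL, add_sub_cancel_left]

theorem geomRatio_nonneg {L : ℝ} (hL : 0 ≤ L) : 0 ≤ geomRatio L :=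
  div_nonneg hL (by linarith)

theorem geomRatio_lt_one {L : ℝ} (hL : -1 < L) : geomRatio L < 1 :=
  (div_lt_one (by linarith)).mpr (lt_add_one L)

theorem geomRatio_le_geomRatio {L L' : ℝ} (hL : -1 < L) (hLL' : L ≤ L') :
    geomRatio L ≤ geomRatio L' := by
  rw [geomRatio, geomRatio, div_le_div_iff₀ (by linarith) (by linarith)]
  linarith

/-- For `1 ≤ L ≤ L'`, the geometric distribution with mean `L'` is the convolution of the
geometric distribution with mean `L` with some probability distribution `ν` on `ℕ`. -/
theorem stmt15 (L L' : ℝ) (hL : 1 ≤ L) (hLL' : L ≤ L') :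
    ∃ ν : ℕ → ℝ, (∀ t, 0 ≤ ν t) ∧ (∑' t : ℕ, ν t) = 1 ∧
      ∀ t : ℕ, geomPMF L' t = ∑ h ∈ Finset.range (t + 1), geomPMF L h * ν (t - h) := by
  set a := geomRatio L
  set b := geomRatio L'
  have ha1 : 1 - a ≠ 0 := sub_ne_zero.mpr (geomRatio_lt_one (by linarith)).ne'
  have hab : a ≤ b := geomRatio_le_geomRatio (by linarith) hLL'
  have hb0 : 0 ≤ b := geomRatio_nonneg (by linarith)
  have hb1 : b < 1 := geomRatio_lt_one (by linarith)
  refine ⟨fun t => (1 - b) / (1 - a) * geomQuotCoeff a b t, fun t => ?_, ?_, fun t => ?_⟩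
  · exact mul_nonneg (div_nonneg (by linarith) (by linarith))
      (geomQuotCoeff_nonneg hab hb0 t)
  · rw [tsum_mul_left, (hasSum_geomQuotCoeff a (abs_lt.mpr ⟨by linarith, hb1⟩)).tsum_eq]
    field_simp [sub_ne_zero.mpr hb1.ne']
  · calc geomPMF L' t = (1 - b) * b ^ t := geomPMF_eq L' (by linarith) t
      _ = (1 - b) / (1 - a) *
            ((1 - a) * ∑ h ∈ range (t + 1), a ^ h * geomQuotCoeff a b (t - h)) := by
        rw [sum_range_pow_mul_geomQuotCoeff]; field_simp
      _ = ∑ h ∈ range (t + 1),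
            geomPMF L h * ((1 - b) / (1 - a) * geomQuotCoeff a b (t - h)) := by
        simp only [mul_sum, geomPMF_eq L (by linarith : L + 1 ≠ 0)]
        exact sum_congr rfl fun _ _ => by ring
end

section
/- Let U be a finite set, ν a probability measure on U, and g:U→[0,∞) a function with Σ_{u∈U} ν(u)·g(u) = 1. For τ>0 let S_τ = {u∈U : g(u) > τ}. Let B,I:(0,∞)→[0,∞) be Lebesgue measurable functions with ∫_0^∞ B(τ)dτ ≤ G₀ and ∫_0^∞ I(τ)dτ ≤ J₀ for reals G₀,J₀ ≥ 0. Then there exists τ>0 with ν(S_τ) > 0 and B(τ) + I(τ) ≤ (G₀+J₀)·ν(S_τ). -/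
/-!
Write `F τ = ν(S_τ)`. By the layer-cake formula `∫_0^∞ F = 1`, so if `B + I > (G₀ + J₀) F`
wherever `F > 0`, integrating over the set `{F > 0}`, which has positive measure, would give
`∫_0^∞ (B + I) > G₀ + J₀`.
-/

open MeasureTheory ENNReal

variable {α : Type*} [MeasurableSpace α] {μ : Measure α}

theorem frequently_pos_and_le_const_mul_of_lintegral_eq_one {f h : α → ℝ≥0∞} {c : ℝ≥0∞}
    (hh : AEMeasurable h μ) (hf : ∫⁻ x, f x ∂μ = 1) (hc : c ≠ ∞) (hhc : ∫⁻ x, h x ∂μ ≤ c) :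
    ∃ᵐ x ∂μ, 0 < f x ∧ h x ≤ c * f x := by
  by_contra hcon
  rw [Filter.not_frequently] at hcon
  have hlt : ∀ᵐ x ∂μ, 0 < f x → c * f x < h x := hcon.mono fun x hx hfx =>
    lt_of_not_ge fun hle => hx ⟨hfx, hle⟩
  have hle : (fun x => c * f x) ≤ᵐ[μ] h := hlt.mono fun x hx => by
    rcases eq_zero_or_pos (f x) with hfx | hfx
    · simp [hfx]
    · exact (hx hfx).le
  have hf_ne : ∃ᵐ x ∂μ, f x ≠ 0 := fun hae => by
    simp [lintegral_congr_ae (hae.mono fun x hx => not_not.mp hx)] at hf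
  have hne : ∃ᵐ x ∂μ, c * f x ≠ h x :=
    (hf_ne.and_eventually hlt).mono fun x ⟨hfx, hx⟩ => (hx (pos_iff_ne_zero.mpr hfx)).ne
  have hcf : ∫⁻ x, c * f x ∂μ = c := by rw [lintegral_const_mul' c f hc, hf, mul_one]
  have hlt_int := lintegral_strict_mono_of_ae_le_of_frequently_ae_lt hh (hcf.symm ▸ hc) hle hne
  rw [hcf] at hlt_int
  exact hlt_int.not_ge hhc

theorem lintegral_ofReal_add_le {f g : α → ℝ} (hf : Measurable f) :
    ∫⁻ x, ENNReal.ofReal (f x + g x) ∂μ ≤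
      ∫⁻ x, ENNReal.ofReal (f x) ∂μ + ∫⁻ x, ENNReal.ofReal (g x) ∂μ :=
  (lintegral_mono fun _ => ofReal_add_le).trans_eq (lintegral_add_left hf.ennreal_ofReal _)

theorem setLIntegral_Ioi_sum_filter_lt {U : Type*} [Fintype U] (ν : U → ℝ≥0∞) (g : U → ℝ) :
    ∫⁻ τ in Set.Ioi (0 : ℝ), ∑ u ∈ Finset.univ.filter (fun u => τ < g u), ν u =
      ∑ u, ν u * ENNReal.ofReal (g u) := by
  have hind : ∀ τ, ∑ u ∈ Finset.univ.filter (fun u => τ < g u), ν u =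
      ∑ u, (Set.Iio (g u)).indicator (fun _ => ν u) τ := by
    intro τ
    simp [Finset.sum_filter, Set.indicator_apply]
  simp_rw [hind]
  rw [lintegral_finsetSum _ fun u _ => measurable_const.indicator measurableSet_Iio]
  refine Finset.sum_congr rfl fun u _ => ?_
  rw [lintegral_indicator_const measurableSet_Iio, Measure.restrict_apply measurableSet_Iio,
    Set.Iio_inter_Ioi, Real.volume_Ioo, sub_zero]

theorem stmt19_general (U : Type) [Fintype U]
    (ν : U → ℝ) (hν0 : ∀ u, 0 ≤ ν u)
    (g : U → ℝ) (hg0 : ∀ u, 0 ≤ g u) (hg1 : ∑ u, ν u * g u = 1)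
    (B I : ℝ → ℝ)
    (hBm : Measurable B) (hIm : Measurable I)
    (G₀ J₀ : ℝ) (hG₀ : 0 ≤ G₀) (hJ₀ : 0 ≤ J₀)
    (hBint : (∫⁻ τ in Set.Ioi (0 : ℝ), ENNReal.ofReal (B τ)) ≤ ENNReal.ofReal G₀)
    (hIint : (∫⁻ τ in Set.Ioi (0 : ℝ), ENNReal.ofReal (I τ)) ≤ ENNReal.ofReal J₀) :
    ∃ τ : ℝ, 0 < τ ∧
      0 < (∑ u ∈ Finset.univ.filter (fun u => τ < g u), ν u) ∧
      B τ + I τ ≤ (G₀ + J₀) * ∑ u ∈ Finset.univ.filter (fun u => τ < g u), ν u := by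
  set F : ℝ → ℝ := fun τ => ∑ u ∈ Finset.univ.filter (fun u => τ < g u), ν u
  have hF0 : ∀ τ, 0 ≤ F τ := fun τ => Finset.sum_nonneg fun u _ => hν0 u
  have hlayer : ∫⁻ τ in Set.Ioi (0 : ℝ), ENNReal.ofReal (F τ) = 1 := by
    simp_rw [F, ENNReal.ofReal_sum_of_nonneg fun u _ => hν0 u, setLIntegral_Ioi_sum_filter_lt,
      ← ENNReal.ofReal_mul (hν0 _)]
    rw [← ENNReal.ofReal_sum_of_nonneg fun u _ => mul_nonneg (hν0 u) (hg0 u), hg1, ofReal_one]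
  have hBI : ∫⁻ τ in Set.Ioi (0 : ℝ), ENNReal.ofReal (B τ + I τ) ≤ ENNReal.ofReal (G₀ + J₀) := by
    rw [ENNReal.ofReal_add hG₀ hJ₀]
    exact (lintegral_ofReal_add_le hBm).trans (add_le_add hBint hIint)
  obtain ⟨τ, ⟨hFτ, hle⟩, hτ⟩ := ((frequently_pos_and_le_const_mul_of_lintegral_eq_one
    (hBm.add hIm).ennreal_ofReal.aemeasurable hlayer ofReal_ne_top hBI).and_eventually
    (ae_restrict_mem measurableSet_Ioi)).exists
  rw [← ENNReal.ofReal_mul (by linarith), ENNReal.ofReal_le_ofReal_iff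
    (mul_nonneg (by linarith) (hF0 τ))] at hle
  exact ⟨τ, hτ, ENNReal.ofReal_pos.mp hFτ, hle⟩

/-- Threshold averaging: if `ν` is a probability measure on a finite set `U`, `g ≥ 0` has
`ν`-average `1`, and `B, I ≥ 0` are measurable with `∫_0^∞ B ≤ G₀`, `∫_0^∞ I ≤ J₀`, then some
superlevel set `S_τ = {u : g(u) > τ}` with `ν(S_τ) > 0` satisfies
`B(τ) + I(τ) ≤ (G₀+J₀)·ν(S_τ)`. -/
theorem stmt19 (U : Type) [Fintype U]
    (ν : U → ℝ) (hν0 : ∀ u, 0 ≤ ν u) (hν1 : ∑ u, ν u = 1)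
    (g : U → ℝ) (hg0 : ∀ u, 0 ≤ g u) (hg1 : ∑ u, ν u * g u = 1)
    (B I : ℝ → ℝ) (hB0 : ∀ τ, 0 ≤ B τ) (hI0 : ∀ τ, 0 ≤ I τ)
    (hBm : Measurable B) (hIm : Measurable I)
    (G₀ J₀ : ℝ) (hG₀ : 0 ≤ G₀) (hJ₀ : 0 ≤ J₀)
    (hBint : (∫⁻ τ in Set.Ioi (0 : ℝ), ENNReal.ofReal (B τ)) ≤ ENNReal.ofReal G₀)
    (hIint : (∫⁻ τ in Set.Ioi (0 : ℝ), ENNReal.ofReal (I τ)) ≤ ENNReal.ofReal J₀) :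
    ∃ τ : ℝ, 0 < τ ∧
      0 < (∑ u ∈ Finset.univ.filter (fun u => τ < g u), ν u) ∧
      B τ + I τ ≤ (G₀ + J₀) * ∑ u ∈ Finset.univ.filter (fun u => τ < g u), ν u :=
  stmt19_general U ν hν0 g hg0 hg1 B I hBm hIm G₀ J₀ hG₀ hJ₀ hBint hIint
end
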